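/- Let L/K be a quadratic extension of fields with nontrivial automorphism τ, let r ≥ 3, and consider elements of GL_{2r}(L). Suppose there exist d₁₁, d₂₁, d₃₁, d₁₂, d₂₂, d₃₂ ∈ O_L^× (units), u ∈ L^× with u·τ(u) = 1, and a uniformizer π of L (an element with τ(π) ≠ π generating the maximal ideal) satisfying: (i) τ(d₂₁)^{−1} = u·d₁₁, (ii) d₂₂·d₃₂ = u·π^{−1}·τ(π), (iii) d₃₁ = d₁₂ and d₁₁·d₂₁·d₃₁^{−1} = d₁₂^{−1}·d₂₂·d₃₂. Then τ(d₁₁·π) = d₁₁·π, i.e. d₁₁·π is a τ-fixed uniformizer. Consequently, if L/K is ramified quadratic (so no uniformizer of L is fixed by τ), no such data exist. -/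

import Mathlib

/-!
Writing `a = d₁₁`, `b = d₂₁`, relation (iii) says `a b = d₂₂ d₃₂`, so (ii) becomes
`a b = u π⁻¹ τ(π)`. Relation (i) gives `u⁻¹ = a τ(b)`, and `u τ(u) = 1` turns this into
`τ(u) = a τ(b)`. Applying the involution `τ` to `a b = u π⁻¹ τ(π)` and substituting yields
`τ(a) τ(b) = a τ(b) π / τ(π)`, i.e. `τ(a π) = a π`.
-/

theorem RingHom.apply_mul_eq_of_involutive_of_norm_eq_one {L : Type*} [Field L] (τ : L →+* L)
    (hτ : ∀ x, τ (τ x) = x) {a b u p : L} (hu : u * τ u = 1) (hb : (τ b)⁻¹ = u * a)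
    (hab : a * b = u * p⁻¹ * τ p) : τ (a * p) = a * p := by
  have hu0 : u ≠ 0 := left_ne_zero_of_mul_eq_one hu
  rcases eq_or_ne p 0 with rfl | hp
  · simp
  rcases eq_or_ne (τ b) 0 with hτb | hτb
  · obtain rfl : a = 0 := by simpa [hτb, hu0] using hb
    simp
  have hτp : τ p ≠ 0 := by simpa using (map_ne_zero τ).mpr hp
  have hτu : τ u = a * τ b := by
    refine mul_left_cancel₀ hu0 ?_
    rw [hu, ← mul_assoc, ← hb, inv_mul_cancel₀ hτb]
  have hτab : τ a * τ b = a * τ b * (τ p)⁻¹ * p := by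
    simpa [map_inv₀, hτ, hτu] using congrArg τ hab
  rw [map_mul]
  field_simp at hτab
  exact hτab

theorem stmt_9_general {A L : Type*} [CommRing A] [Field L] [Algebra A L]
    (τ : L ≃+* L) (hτ2 : ∀ x, τ (τ x) = x)
    (d11 d21 d31 d12 d22 d32 : Aˣ) (u : L) (hu : u * τ u = 1) (π : A)
    (h1 : (τ (algebraMap A L ↑d21))⁻¹ = u * algebraMap A L ↑d11)
    (h2 : algebraMap A L ↑d22 * algebraMap A L ↑d32 =
      u * (algebraMap A L π)⁻¹ * τ (algebraMap A L π))
    (h3a : (d31 : A) = (d12 : A))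
    (h3b : algebraMap A L ↑d11 * algebraMap A L ↑d21 * (algebraMap A L ↑d31)⁻¹ =
      (algebraMap A L ↑d12)⁻¹ * algebraMap A L ↑d22 * algebraMap A L ↑d32) :
    τ (algebraMap A L ↑d11 * algebraMap A L π) = algebraMap A L ↑d11 * algebraMap A L π ∧
    ((∀ y : Aˣ, τ (algebraMap A L ↑y * algebraMap A L π) ≠
        algebraMap A L ↑y * algebraMap A L π) → False) := by
  have hd12 : algebraMap A L (d12 : A) ≠ 0 := (d12.isUnit.map (algebraMap A L)).ne_zero
  have h3 : algebraMap A L ↑d11 * algebraMap A L ↑d21 =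
      algebraMap A L ↑d22 * algebraMap A L ↑d32 := by
    rw [h3a] at h3b
    refine mul_right_cancel₀ (inv_ne_zero hd12) ?_
    linear_combination h3b
  have hfixed := (τ : L →+* L).apply_mul_eq_of_involutive_of_norm_eq_one hτ2 hu h1 (h3.trans h2)
  exact ⟨hfixed, fun hnone => hnone d11 hfixed⟩

/-- In a ramified even unitary group U_{2r}, r ≥ 3, suppose units d_{ij} of the
valuation ring A of L, u ∈ L with u·τ(u) = 1, and a non-τ-fixed uniformizer π
satisfy the constraints coming from the Coxeter braid relations.  Then
τ(d₁₁·π) = d₁₁·π, i.e. d₁₁·π is a τ-fixed uniformizer; consequently, if no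
uniformizer of L of the form (unit)·π is τ-fixed, no such data exist. -/
theorem stmt_9 {A L : Type*} [CommRing A] [IsDomain A] [IsDiscreteValuationRing A]
    [Field L] [Algebra A L] [IsFractionRing A L]
    (τ : L ≃+* L) (hτ2 : ∀ x, τ (τ x) = x) (r : ℕ) (hr : 3 ≤ r)
    (d11 d21 d31 d12 d22 d32 : Aˣ) (u : L) (hu : u * τ u = 1)
    (π : A) (hπ : Irreducible π) (hπτ : τ (algebraMap A L π) ≠ algebraMap A L π)
    (h1 : (τ (algebraMap A L ↑d21))⁻¹ = u * algebraMap A L ↑d11)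
    (h2 : algebraMap A L ↑d22 * algebraMap A L ↑d32 =
      u * (algebraMap A L π)⁻¹ * τ (algebraMap A L π))
    (h3a : (d31 : A) = (d12 : A))
    (h3b : algebraMap A L ↑d11 * algebraMap A L ↑d21 * (algebraMap A L ↑d31)⁻¹ =
      (algebraMap A L ↑d12)⁻¹ * algebraMap A L ↑d22 * algebraMap A L ↑d32) :
    τ (algebraMap A L ↑d11 * algebraMap A L π) = algebraMap A L ↑d11 * algebraMap A L π ∧
    ((∀ y : Aˣ, τ (algebraMap A L ↑y * algebraMap A L π) ≠
        algebraMap A L ↑y * algebraMap A L π) → False) :=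
  stmt_9_general τ hτ2 d11 d21 d31 d12 d22 d32 u hu π h1 h2 h3a h3b
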